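/- Suppose 0 < 1/n ≪ c ≪ α ≪ 1, n is divisible by 3, and G is an oriented graph on n vertices with δ⁰(G) ≥ (1/2 - c)n. Let U₀ ⊆ V(G) with |U₀| ≤ αn. Then there exists a collection C of vertex-disjoint cyclic triangles of G with |V(C)| ≤ 3|U₀| such that U₀ ⊆ V(C). -/

import Mathlib

open Finset
open scoped Classical

/-- An oriented graph: no loops and no pair of antiparallel edges. -/
def IsOriented {n : ℕ} (G : Fin n → Fin n → Prop) : Prop :=
  (∀ v, ¬ G v v) ∧ ∀ u v : Fin n, G u v → ¬ G v u

/-- `d⁺(v, A)`: number of out-neighbors of `v` in `A`. -/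
noncomputable def outDegOn {n : ℕ} (G : Fin n → Fin n → Prop) (v : Fin n)
    (A : Finset (Fin n)) : ℕ :=
  (A.filter fun u => G v u).card

/-- `d⁻(v, A)`: number of in-neighbors of `v` in `A`. -/
noncomputable def inDegOn {n : ℕ} (G : Fin n → Fin n → Prop) (v : Fin n)
    (A : Finset (Fin n)) : ℕ :=
  (A.filter fun u => G u v).card

/-- outdegree `d⁺(v)`. -/
noncomputable def outDeg {n : ℕ} (G : Fin n → Fin n → Prop) (v : Fin n) : ℕ :=
  outDegOn G v univ

/-- indegree `d⁻(v)`. -/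
noncomputable def inDeg {n : ℕ} (G : Fin n → Fin n → Prop) (v : Fin n) : ℕ :=
  inDegOn G v univ

/-- The minimum semidegree condition `δ⁰(G) ≥ b`. -/
def MinSemidegreeGE {n : ℕ} (G : Fin n → Fin n → Prop) (b : ℝ) : Prop :=
  ∀ v : Fin n, b ≤ (outDeg G v : ℝ) ∧ b ≤ (inDeg G v : ℝ)

/-- `e⁺(A, B)`: number of edges directed from `A` to `B`. -/
noncomputable def eOut {n : ℕ} (G : Fin n → Fin n → Prop) (A B : Finset (Fin n)) : ℕ :=
  ∑ a ∈ A, outDegOn G a B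

/-- `s` is the vertex set of a cyclic triangle. -/
def IsCycTri {n : ℕ} (G : Fin n → Fin n → Prop) (s : Finset (Fin n)) : Prop :=
  ∃ a b c : Fin n, G a b ∧ G b c ∧ G c a ∧ s = {a, b, c}

/-- `s` is the vertex set of a transitive triangle. -/
def IsTrnTri {n : ℕ} (G : Fin n → Fin n → Prop) (s : Finset (Fin n)) : Prop :=
  ∃ a b c : Fin n, G a b ∧ G b c ∧ G a c ∧ s = {a, b, c}

/-- `cyc(A)`: number of cyclic triangles with all vertices in `A`. -/
noncomputable def cycIn {n : ℕ} (G : Fin n → Fin n → Prop) (A : Finset (Fin n)) : ℕ :=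
  ((A.powersetCard 3).filter fun s => IsCycTri G s).card

/-- `trn(A)`: number of transitive triangles with all vertices in `A`. -/
noncomputable def trnIn {n : ℕ} (G : Fin n → Fin n → Prop) (A : Finset (Fin n)) : ℕ :=
  ((A.powersetCard 3).filter fun s => IsTrnTri G s).card

/-- `cyc(A, B, C)`: number of cyclic triangles with one vertex in each of `A`, `B`, `C`
(in the sense of some labeling of its vertex set). -/
noncomputable def cyc3 {n : ℕ} (G : Fin n → Fin n → Prop) (A B C : Finset (Fin n)) : ℕ :=
  (((univ : Finset (Fin n)).powersetCard 3).filter fun s =>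
    IsCycTri G s ∧ ∃ x ∈ A, ∃ y ∈ B, ∃ z ∈ C, s = ({x, y, z} : Finset (Fin n))).card

/-- A cyclic triangle tiling: a collection of vertex-disjoint cyclic triangles. -/
def IsCycTiling {n : ℕ} (G : Fin n → Fin n → Prop) (C : Finset (Finset (Fin n))) : Prop :=
  (∀ s ∈ C, IsCycTri G s) ∧ ∀ s ∈ C, ∀ t ∈ C, s ≠ t → Disjoint s t

/-- A cyclic triangle factor: a tiling covering every vertex. -/
def IsCycFactor {n : ℕ} (G : Fin n → Fin n → Prop) (C : Finset (Finset (Fin n))) : Prop :=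
  IsCycTiling G C ∧ C.biUnion id = univ

/-- `W` can be perfectly covered by vertex-disjoint cyclic triangles
(i.e. `H(G)[W]` has a perfect matching). -/
def HasCycPM {n : ℕ} (G : Fin n → Fin n → Prop) (W : Finset (Fin n)) : Prop :=
  ∃ C : Finset (Finset (Fin n)), IsCycTiling G C ∧ C.biUnion id = W

/-- The number of `(H(G), x, y)`-linking `(3ℓ-1)`-sets. -/
noncomputable def linkCount {n : ℕ} (G : Fin n → Fin n → Prop) (ℓ : ℕ) (x y : Fin n) : ℕ :=
  (((univ : Finset (Fin n)).powersetCard (3 * ℓ - 1)).filter fun S =>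
    x ∉ S ∧ y ∉ S ∧ HasCycPM G (insert x S) ∧ HasCycPM G (insert y S)).card

/-!
Cover the vertices of `U₀` greedily, one at a time: the vertices covered so far form a set `F`
of fewer than `3|U₀| ≤ 3αn` vertices, and every vertex `v` lies on a cyclic triangle avoiding
such an `F`. Otherwise there is no edge from `A = N⁺(v) \ F` to `B = N⁻(v) \ F`. Since `G` is
oriented, some `a ∈ A` has fewer than `|A|/2` out-neighbours inside `A`, and all its other
out-neighbours lie outside `A ∪ B`; so `δ⁰ < n - |A|/2 - |B|`, which contradicts
`|A|, |B| ≥ δ⁰ - |F|`.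
-/

section

variable {n : ℕ} {G : Fin n → Fin n → Prop}

theorem sum_outDegOn_eq_sum_inDegOn (A : Finset (Fin n)) :
    ∑ a ∈ A, outDegOn G a A = ∑ a ∈ A, inDegOn G a A := by
  simp only [outDegOn, inDegOn, card_filter]
  exact sum_comm

theorem IsOriented.outDegOn_add_inDegOn_le (hG : IsOriented G) (a : Fin n)
    (A : Finset (Fin n)) : outDegOn G a A + inDegOn G a A ≤ (A.erase a).card := by
  have hdisj : Disjoint (A.filter fun u => G a u) (A.filter fun u => G u a) :=
    disjoint_filter.2 fun u _ hau hua => hG.2 a u hau hua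
  rw [outDegOn, inDegOn, ← card_union_of_disjoint hdisj]
  refine card_le_card fun u hu => ?_
  simp only [mem_union, mem_filter] at hu
  refine mem_erase.2 ⟨?_, hu.elim And.left And.left⟩
  rintro rfl
  exact hG.1 u (hu.elim And.right And.right)

theorem IsOriented.exists_two_mul_outDegOn_lt (hG : IsOriented G) {A : Finset (Fin n)}
    (hA : A.Nonempty) : ∃ a ∈ A, 2 * outDegOn G a A < A.card := by
  apply exists_lt_of_sum_lt
  calc ∑ a ∈ A, 2 * outDegOn G a A
      = ∑ a ∈ A, (outDegOn G a A + inDegOn G a A) := by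
        rw [← mul_sum, sum_add_distrib, sum_outDegOn_eq_sum_inDegOn, two_mul]
    _ < ∑ _a ∈ A, A.card := sum_lt_sum_of_nonempty hA fun a ha =>
        (hG.outDegOn_add_inDegOn_le a A).trans_lt (card_erase_lt_of_mem ha)

theorem IsOriented.exists_cycTri_through_avoiding (hG : IsOriented G) {d : ℝ}
    (hd : MinSemidegreeGE G d) (v : Fin n) (F : Finset (Fin n))
    (hF : 2 * n + 3 * F.card < 5 * d) :
    ∃ b c, G v b ∧ G b c ∧ G c v ∧ b ∉ F ∧ c ∉ F := by
  by_contra! hno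
  set A := (univ.filter fun u => G v u) \ F
  set B := (univ.filter fun u => G u v) \ F
  have hFn : (F.card : ℝ) ≤ n := by
    exact_mod_cast (card_le_univ F).trans_eq (Fintype.card_fin n)
  have hA : d - F.card ≤ A.card := by
    have : (outDeg G v : ℝ) ≤ A.card + F.card := by
      exact_mod_cast card_le_card_sdiff_add_card (s := univ.filter fun u => G v u) (t := F)
    linarith [(hd v).1]
  have hB : d - F.card ≤ B.card := by
    have : (inDeg G v : ℝ) ≤ B.card + F.card := by
      exact_mod_cast card_le_card_sdiff_add_card (s := univ.filter fun u => G u v) (t := F)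
    linarith [(hd v).2]
  have hAB : Disjoint A B := by
    refine disjoint_left.2 fun u huA huB => hG.2 v u ?_ ?_
    · exact (mem_filter.1 (mem_sdiff.1 huA).1).2
    · exact (mem_filter.1 (mem_sdiff.1 huB).1).2
  obtain ⟨a, haA, ha⟩ := hG.exists_two_mul_outDegOn_lt (A := A) (card_pos.1 (by
    have : (0 : ℝ) < A.card := by linarith
    exact_mod_cast this))
  -- no out-neighbour of `a` lies in `B`, else `v → a → u → v` avoids `F`
  have hout : outDeg G a ≤ outDegOn G a A + (univ \ (A ∪ B)).card := by
    refine (card_le_card (s := univ.filter (G a ·)) (t := A.filter (G a ·) ∪ (univ \ (A ∪ B)))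
      fun u hu => ?_).trans (card_union_le _ _)
    have hau : G a u := (mem_filter.1 hu).2
    by_cases huA : u ∈ A
    · exact mem_union_left _ (mem_filter.2 ⟨huA, hau⟩)
    refine mem_union_right _ (mem_sdiff.2 ⟨mem_univ u, fun huAB => ?_⟩)
    obtain ⟨hva, haF⟩ := mem_sdiff.1 haA
    obtain ⟨huv, huF⟩ := mem_sdiff.1 ((mem_union.1 huAB).resolve_left huA)
    exact huF (hno a u (mem_filter.1 hva).2 hau (mem_filter.1 huv).2 haF)
  have hrest : ((univ \ (A ∪ B)).card : ℝ) + (A.card + B.card) = n := by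
    have := card_sdiff_add_card_eq_card (subset_univ (A ∪ B))
    rw [card_union_of_disjoint hAB, card_univ, Fintype.card_fin] at this
    exact_mod_cast this
  have hout' : (outDeg G a : ℝ) ≤ outDegOn G a A + (univ \ (A ∪ B)).card := by
    exact_mod_cast hout
  have ha' : 2 * (outDegOn G a A : ℝ) < A.card := by exact_mod_cast ha
  linarith [(hd a).1]

theorem IsCycTiling.empty : IsCycTiling G ∅ :=
  ⟨fun _ h => absurd h (notMem_empty _), fun _ h => absurd h (notMem_empty _)⟩

theorem IsCycTiling.insert {C : Finset (Finset (Fin n))} (hC : IsCycTiling G C)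
    {s : Finset (Fin n)} (hs : IsCycTri G s) (hdisj : Disjoint s (C.biUnion id)) :
    IsCycTiling G (insert s C) := by
  have hdisj' : ∀ t ∈ C, Disjoint s t := fun t ht =>
    hdisj.mono_right (subset_biUnion_of_mem id ht)
  refine ⟨fun t ht => ?_, fun t₁ h₁ t₂ h₂ hne => ?_⟩
  · rcases mem_insert.1 ht with rfl | ht
    exacts [hs, hC.1 t ht]
  · rcases mem_insert.1 h₁ with rfl | h₁C <;> rcases mem_insert.1 h₂ with rfl | h₂C
    exacts [absurd rfl hne, hdisj' t₂ h₂C, (hdisj' t₁ h₁C).symm, hC.2 t₁ h₁C t₂ h₂C hne]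

theorem exists_cycTiling_covering {m : ℕ}
    (hext : ∀ v (F : Finset (Fin n)), F.card < m →
      ∃ b c, G v b ∧ G b c ∧ G c v ∧ b ∉ F ∧ c ∉ F)
    (U : Finset (Fin n)) (hU : 3 * U.card ≤ m) :
    ∃ C : Finset (Finset (Fin n)), IsCycTiling G C ∧
      (C.biUnion id).card ≤ 3 * U.card ∧ U ⊆ C.biUnion id := by
  induction U using Finset.induction_on with
  | empty => exact ⟨∅, IsCycTiling.empty, by simp, empty_subset _⟩
  | insert v U hvU ih =>
    rw [card_insert_of_notMem hvU] at hU ⊢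
    obtain ⟨C, hC, hCcard, hUC⟩ := ih (by omega)
    by_cases hvC : v ∈ C.biUnion id
    · exact ⟨C, hC, by omega, insert_subset hvC hUC⟩
    obtain ⟨b, c, hvb, hbc, hcv, hbC, hcC⟩ := hext v (C.biUnion id) (by omega)
    have hdisj : Disjoint {v, b, c} (C.biUnion id) := by
      simp only [disjoint_insert_left, disjoint_singleton_left]
      exact ⟨hvC, hbC, hcC⟩
    refine ⟨insert {v, b, c} C, hC.insert ⟨v, b, c, hvb, hbc, hcv, rfl⟩ hdisj, ?_, ?_⟩
    · rw [biUnion_insert, id, card_union_of_disjoint hdisj]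
      have := card_le_three (a := v) (b := b) (c := c)
      omega
    · rw [biUnion_insert]
      exact insert_subset (mem_union_left _ (mem_insert_self _ _))
        (hUC.trans subset_union_right)

end

theorem stmt_18 :
    ∃ α₀ > (0:ℝ), ∀ α : ℝ, 0 < α → α ≤ α₀ →
    ∃ c₀ > (0:ℝ), ∀ c : ℝ, 0 < c → c ≤ c₀ →
    ∃ N : ℕ, ∀ n : ℕ, N ≤ n → 3 ∣ n → ∀ G : Fin n → Fin n → Prop, IsOriented G →
      MinSemidegreeGE G ((1/2 - c) * n) →
      ∀ U₀ : Finset (Fin n), (U₀.card : ℝ) ≤ α * n →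
        ∃ C : Finset (Finset (Fin n)), IsCycTiling G C ∧
          (C.biUnion id).card ≤ 3 * U₀.card ∧ U₀ ⊆ C.biUnion id := by
  refine ⟨1/36, by norm_num, fun α _ hα => ⟨1/100, by norm_num,
    fun c _ hc => ⟨1, fun n hn _ G hG hd U₀ hU₀ => ?_⟩⟩⟩
  refine exists_cycTiling_covering (fun v F hF => hG.exists_cycTri_through_avoiding hd v F ?_)
    U₀ le_rfl
  -- `2n + 3|F| < 2n + 9αn ≤ 5(1/2 - c)n` since `9α + 5c < 1/2`
  have hn' : (1 : ℝ) ≤ n := by exact_mod_cast hn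
  have hF' : (F.card : ℝ) < 3 * U₀.card := by exact_mod_cast hF
  nlinarith
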